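/- arXiv:2305.06857 — 2 statements merged into one kernel-verified Lean document; each statement's English description precedes it below -/
import Mathlib

section
/- Let F be a field, f, l positive integers, G an f × l matrix over F, S ⊆ [f], and i ∈ [f] with i ∉ S. Let U_S = {u_s : s ∈ S} be the set of standard basis vectors of F^f indexed by S, and let G_D (for D ⊆ [f]) denote the column span of the matrix obtained from G by zeroing out all rows not in D. If the standard basis vector u_i lies in span(columns of G ∪ U_S), then u_i lies in span of the columns of G restricted (by zeroing rows) to any set D ⊆ [f] with i ∈ D and D ∩ S = ∅. -/
open Classical in
theorem decoded_basis_in_projected_span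
    (F : Type*) [Field F] (f l : ℕ) (hf : 1 ≤ f) (hl : 1 ≤ l)
    (G : Matrix (Fin f) (Fin l) F) (S : Set (Fin f)) (i : Fin f) (hiS : i ∉ S)
    (hdec : (Pi.single i 1 : Fin f → F) ∈
      Submodule.span F
        ((Set.range (fun c : Fin l => fun r : Fin f => G r c)) ∪
          ((fun s : Fin f => (Pi.single s 1 : Fin f → F)) '' S)))
    (D : Set (Fin f)) (hiD : i ∈ D) (hDS : D ∩ S = ∅) :
    (Pi.single i 1 : Fin f → F) ∈
      Submodule.span F
        (Set.range (fun c : Fin l =>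
          fun r : Fin f => if r ∈ D then G r c else 0)) := by
  classical
  set P : (Fin f → F) →ₗ[F] (Fin f → F) :=
    { toFun := fun v r => if r ∈ D then v r else 0
      map_add' := by intro x y; funext r; by_cases h : r ∈ D <;> simp [h]
      map_smul' := by intro c x; funext r; by_cases h : r ∈ D <;> simp [h] }
  have hle : Submodule.span F
      ((Set.range (fun c : Fin l => fun r : Fin f => G r c)) ∪
        ((fun s : Fin f => (Pi.single s 1 : Fin f → F)) '' S)) ≤
      (Submodule.span F (Set.range (fun c : Fin l =>
        fun r : Fin f => if r ∈ D then G r c else 0))).comap P := by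
    rw [Submodule.span_le]
    rintro v (⟨c, rfl⟩ | ⟨s, hs, rfl⟩)
    · exact Submodule.subset_span ⟨c, rfl⟩
    · have hsD : s ∉ D := by
        intro h
        exact absurd (Set.mem_inter h hs) (by simp [hDS])
      have h0 : P (Pi.single s 1 : Fin f → F) = 0 := by
        funext r
        by_cases h : r ∈ D
        · have : r ≠ s := fun e => hsD (e ▸ h)
          simp [P, h, Pi.single_eq_of_ne this]
        · simp [P, h]
      refine Submodule.mem_comap.mpr ?_
      show P (Pi.single s 1) ∈ _
      rw [h0]
      exact Submodule.zero_mem _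
  have hmem := hle hdec
  have hPi : P (Pi.single i 1 : Fin f → F) = Pi.single i 1 := by
    funext r
    by_cases h : r ∈ D
    · simp [P, h]
    · have : r ≠ i := fun e => h (e ▸ hiD)
      simp [P, h, Pi.single_eq_of_ne this]
  rw [Submodule.mem_comap, hPi] at hmem
  exact hmem
end

section
/- Let D ⊆ [f] with |D| ≥ ∑_{j∈J}(k_j + 1) fail, i.e., suppose |D| < ∑_{j∈J}(k_j + 1) for a set J of t indices. Then there exists a choice of side information set S with exactly k_j elements from each class subset M_j (|M_j| = μ_j, disjoint, μ_j ≥ k_j + 1) such that for some j ∈ J, D ∩ M_j ⊆ S ∩ M_j; consequently a client with side information S cannot obtain t new messages from t distinct subsets out of D. -/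
/-- If the decoded set `D` has fewer than `∑_{j∈J} (k_j+1)` elements, then some
admissible restricted side information set `S` (with exactly `k_i` elements
from each class `M_i`) covers all the decoded messages of one class `j ∈ J`. -/
theorem small_decoded_set_covered {α : Type*} [DecidableEq α]
    (Γ t : ℕ) (hΓ : 1 ≤ Γ) (M : Fin Γ → Finset α)
    (hdisj : ∀ i i', i ≠ i' → Disjoint (M i) (M i'))
    (μ k : Fin Γ → ℕ) (hM : ∀ i, (M i).card = μ i) (h : ∀ i, k i + 1 ≤ μ i)
    (J : Finset (Fin Γ)) (hJ : J.card = t)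
    (D : Finset α) (hD : D ⊆ Finset.univ.biUnion M)
    (hsmall : D.card < ∑ j ∈ J, (k j + 1)) :
    ∃ S : Finset α, S ⊆ Finset.univ.biUnion M ∧
      (∀ i, (S ∩ M i).card = k i) ∧
      ∃ j ∈ J, D ∩ M j ⊆ S ∩ M j := by
  classical
  obtain ⟨j, hjJ, hjle⟩ : ∃ j ∈ J, (D ∩ M j).card ≤ k j := by
    by_contra hc
    push_neg at hc
    have hsum : ∑ j ∈ J, (k j + 1) ≤ ∑ j ∈ J, (D ∩ M j).card :=
      Finset.sum_le_sum fun i hi => hc i hi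
    have hdis : ∑ j ∈ J, (D ∩ M j).card ≤ D.card := by
      rw [← Finset.card_biUnion (fun a _ b _ hab =>
        (hdisj a b hab).mono Finset.inter_subset_right Finset.inter_subset_right)]
      apply Finset.card_le_card
      intro x hx
      simp only [Finset.mem_biUnion] at hx
      obtain ⟨i, _, hx⟩ := hx
      exact (Finset.mem_inter.mp hx).1
    omega
  have hP : ∀ i : Fin Γ, ∃ P : Finset α,
      (if i = j then D ∩ M i else ∅) ⊆ P ∧ P ⊆ M i ∧ P.card = k i := by
    intro i
    apply Finset.exists_subsuperset_card_eq
    · split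
      · next hij => subst hij; exact Finset.inter_subset_right
      · exact Finset.empty_subset _
    · split
      · next hij => subst hij; exact hjle
      · simp
    · rw [hM i]; have := h i; omega
  choose P hP1 hP2 hP3 using hP
  have key : ∀ i, (Finset.univ.biUnion P) ∩ M i = P i := by
    intro i
    ext x
    simp only [Finset.mem_inter, Finset.mem_biUnion, Finset.mem_univ, true_and]
    constructor
    · rintro ⟨⟨i', hx'⟩, hxM⟩
      rcases eq_or_ne i' i with rfl | hne
      · exact hx'
      · exact absurd hxM (Finset.disjoint_left.mp (hdisj i' i hne) (hP2 i' hx'))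
    · intro hx
      exact ⟨⟨i, hx⟩, hP2 i hx⟩
  refine ⟨Finset.univ.biUnion P, ?_, ?_, j, hjJ, ?_⟩
  · intro x hx
    simp only [Finset.mem_biUnion, Finset.mem_univ, true_and] at hx ⊢
    obtain ⟨i, hx⟩ := hx
    exact ⟨i, hP2 i hx⟩
  · intro i
    rw [key i]; exact hP3 i
  · rw [key j]
    have := hP1 j
    simpa using this
end
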